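/- arXiv:2312.12406 — 2 statements merged into one kernel-verified Lean document; each statement's English description precedes it below -/
import Mathlib

section
/- Let (X, 𝒳, μ, T) be an ergodic measure-preserving system with μ non-atomic and let (𝒫⁽ⁿ⁾)ₙ∈ℕ be a sequence of Kakutani–Rokhlin partitions of (X, 𝒳, μ, T) satisfying (KR1)–(KR4), with d⁽ⁿ⁾ towers at level n. Then the following are equivalent: (i) (X, 𝒳, μ, T) is rigid (i.e. 1-rigid); (ii) there exists a sequence (w(n))ₙ∈ℕ of complete words, where w(n) is a complete word over {1,…,d⁽ⁿ⁾}, such that limsup_{n→∞} μ(𝒯⁽ⁿ⁾_{[w(n)]ₙ}) = 1. -/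
open MeasureTheory Filter Set

section Rigidity

variable {X : Type*} [MeasurableSpace X]

/-- The system `(X, μ, T)` is `γ`-rigid along the increasing sequence `n` of positive
integers: `liminf_k μ(A ∩ T^{-n_k} A) ≥ γ μ(A)` for every measurable set `A`. -/
def IsPartiallyRigidSeq (μ : Measure X) (T : X → X) (γ : ℝ) (n : ℕ → ℕ) : Prop :=
  StrictMono n ∧ 0 < n 0 ∧
    ∀ A : Set X, MeasurableSet A →
      ENNReal.ofReal γ * μ A ≤ Filter.liminf (fun k => μ (A ∩ T^[n k] ⁻¹' A)) Filter.atTop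

/-- The system `(X, μ, T)` is `γ`-rigid. -/
def IsPartiallyRigid (μ : Measure X) (T : X → X) (γ : ℝ) : Prop :=
  ∃ n : ℕ → ℕ, IsPartiallyRigidSeq μ T γ n

/-- The partial rigidity rate `δ_μ`: the supremum of the constants `γ ∈ (0,1]` for which
the system is `γ`-rigid (`0`, by convention on `sSup ∅`, if the system is not partially
rigid). -/
noncomputable def partialRigidityRate (μ : Measure X) (T : X → X) : ℝ :=
  sSup {γ : ℝ | γ ∈ Set.Ioc (0 : ℝ) 1 ∧ IsPartiallyRigid μ T γ}

end Rigidity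

/-- A word is complete if it has length at least 2 and its first and last letters
coincide. -/
def IsCompleteWord {α : Type*} (w : List α) : Prop :=
  2 ≤ w.length ∧ w.head? = w.getLast?

/-- A Kakutani–Rokhlin partition of `X` for the transformation `T`: towers indexed by
`Fin d`, with measurable bases `B a` and heights `h a`; the floors `T^j(B a)`,
`0 ≤ j < h a`, are pairwise disjoint and cover `X`. -/
structure KRPartition (X : Type*) [MeasurableSpace X] (T : X → X) where
  d : ℕ
  B : Fin d → Set X
  h : Fin d → ℕ
  h_pos : ∀ a, 0 < h a
  meas : ∀ a, MeasurableSet (B a)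
  disj : ∀ (a a' : Fin d) (j j' : ℕ), j < h a → j' < h a' →
    (a, j) ≠ (a', j') → Disjoint (T^[j] '' B a) (T^[j'] '' B a')
  cover : (⋃ a : Fin d, ⋃ j ∈ Finset.range (h a), T^[j] '' B a) = Set.univ

namespace KRPartition

variable {X : Type*} [MeasurableSpace X] {T : X → X}

/-- The base `B = ⋃ₐ Bₐ` of the partition. -/
def base (P : KRPartition X T) : Set X := ⋃ a, P.B a

/-- The tower `𝒯ₐ = ⋃_{0 ≤ j < hₐ} T^j(Bₐ)`. -/
def tower (P : KRPartition X T) (a : Fin P.d) : Set X :=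
  ⋃ j ∈ Finset.range (P.h a), T^[j] '' P.B a

/-- The atoms of the partition are the floors `T^j(Bₐ)`, `0 ≤ j < hₐ`. -/
def IsAtom (P : KRPartition X T) (s : Set X) : Prop :=
  ∃ (a : Fin P.d) (j : ℕ), j < P.h a ∧ s = T^[j] '' P.B a

/-- `B_w` for a word `w`: points `x` with `T^{h_{w₁}+⋯+h_{w_{i-1}}} x ∈ B_{w_i}` for
every `1 ≤ i ≤ |w|`. -/
def wordBase (P : KRPartition X T) (w : List (Fin P.d)) : Set X :=
  {x | ∀ i : Fin w.length, T^[((w.take i).map P.h).sum] x ∈ P.B (w.get i)}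

/-- The subtower `𝒯_w = ⋃_{0 ≤ j < h_{w₁}} T^j(B_w)` generated by the word `w`. -/
def wordTower (P : KRPartition X T) (w : List (Fin P.d)) : Set X :=
  ⋃ j ∈ Finset.range ((w.map P.h).headD 0), T^[j] '' P.wordBase w

/-- The sum `h_{w₁} + ⋯ + h_{w_{ℓ-1}}` of the heights of all but the last letter. -/
def wordSum (P : KRPartition X T) (w : List (Fin P.d)) : ℕ :=
  (w.dropLast.map P.h).sum

/-- The union `𝒯_{[w]} = ⋃_{u ∼ w} 𝒯_u` over all complete words `u` equivalent to
`w` (same sum of heights of all but the last letter). -/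
def classTower (P : KRPartition X T) (w : List (Fin P.d)) : Set X :=
  ⋃ u ∈ {u : List (Fin P.d) | IsCompleteWord u ∧ P.wordSum u = P.wordSum w},
    P.wordTower u

end KRPartition

/-- A sequence of Kakutani–Rokhlin partitions with `𝒫⁽⁰⁾ = {X}` satisfying
(KR1)–(KR4). -/
structure KRSequence (X : Type*) [m : MeasurableSpace X] (μ : Measure X) (T : X → X) where
  P : ℕ → KRPartition X T
  d_zero : (P 0).d = 1
  h_zero : ∀ a, (P 0).h a = 1
  B_zero : ∀ a, (P 0).B a = Set.univ
  kr1 : ∀ n, (P (n + 1)).base ⊆ (P n).base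
  kr2 : ∀ n s, (P (n + 1)).IsAtom s → ∃ t, (P n).IsAtom t ∧ s ⊆ t
  kr3 : Filter.Tendsto (fun n => μ (P n).base) Filter.atTop (nhds 0)
  kr4 : MeasurableSpace.generateFrom {s : Set X | ∃ n, (P n).IsAtom s} = m

/-! A point lies in `𝒯⁽ⁿ⁾_{[w]}` exactly when `T^m`, with `m = h_{w₁} + ⋯ + h_{w_{ℓ-1}}`, maps it
back into its own floor of `𝒫⁽ⁿ⁾`; the word is its itinerary through the towers. If `T` is rigid
along `(m_k)`, each of the finitely many floors of `𝒫⁽ⁿ⁾` is almost invariant under `T^{m_k}`, so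
for large `k` almost every point returns to its floor, which yields a word class of measure close
to `1`. Conversely, if `μ(𝒯⁽ⁿ⁾_{[w(n)]}) → 1` along a subsequence, then every measurable set,
approximated by a union of atoms of a fixed level (KR4), is almost invariant under `T^{m_n}`. The
return times `m_n` either tend to infinity along a subsequence, or one value `p` recurs, in which
case `T^p` fixes every set modulo `μ` and `((k + 1) p)_k` is a rigidity sequence. -/

open scoped ENNReal symmDiff Topology

theorem MeasurableEmbedding.iterate {X : Type*} [MeasurableSpace X] {T : X → X}
    (hT : MeasurableEmbedding T) (n : ℕ) : MeasurableEmbedding T^[n] := by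
  induction n with
  | zero => exact .id
  | succ n ih => rw [Function.iterate_succ]; exact ih.comp hT

theorem tendsto_measure_iff_tendsto_measure_compl {X ι : Type*} [MeasurableSpace X]
    {μ : Measure X} [IsProbabilityMeasure μ] {l : Filter ι} {s : ι → Set X}
    (hs : ∀ i, MeasurableSet (s i)) :
    Tendsto (fun i => μ (s i)) l (𝓝 1) ↔ Tendsto (fun i => μ (s i)ᶜ) l (𝓝 0) := by
  simp_rw [prob_compl_eq_one_sub (hs _)]
  constructor <;> intro h
  · simpa using ENNReal.Tendsto.sub tendsto_const_nhds h (.inl ENNReal.one_ne_top)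
  · simpa [ENNReal.sub_sub_cancel ENNReal.one_ne_top prob_le_one] using
      ENNReal.Tendsto.sub tendsto_const_nhds h (.inl ENNReal.one_ne_top)

theorem measure_sdiff_preimage_le_add_symmDiff {X : Type*} [MeasurableSpace X]
    {μ : Measure X} {f : X → X} (hf : MeasurePreserving f μ μ) {A S : Set X}
    (hA : MeasurableSet A) (hS : MeasurableSet S) :
    μ (A \ f ⁻¹' A) ≤ μ (S \ f ⁻¹' S) + μ (S ∆ A) := by
  have hsub : A \ f ⁻¹' A ⊆ (S \ f ⁻¹' S) ∪ ((A \ S) ∪ f ⁻¹' (S \ A)) := by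
    intro x ⟨hx, hfx⟩
    by_cases hxS : x ∈ S
    · by_cases hfxS : f x ∈ S
      · exact .inr (.inr ⟨hfxS, hfx⟩)
      · exact .inl ⟨hxS, hfxS⟩
    · exact .inr (.inl ⟨hx, hxS⟩)
  calc μ (A \ f ⁻¹' A) ≤ μ (S \ f ⁻¹' S) + (μ (A \ S) + μ (f ⁻¹' (S \ A))) :=
        (measure_mono hsub).trans <| (measure_union_le _ _).trans <|
          add_le_add_right (measure_union_le _ _) _
    _ = μ (S \ f ⁻¹' S) + μ (S ∆ A) := by
        rw [hf.measure_preimage (hS.diff hA).nullMeasurableSet,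
          measure_symmDiff_eq hS.nullMeasurableSet hA.nullMeasurableSet, add_comm (μ (A \ S))]

section Rigidity

variable {X : Type*} [MeasurableSpace X] {μ : Measure X} {T : X → X}

theorem le_liminf_measure_inter_preimage_iff [IsFiniteMeasure μ] (hT : Measurable T)
    {n : ℕ → ℕ} {A : Set X} (hA : MeasurableSet A) :
    μ A ≤ liminf (fun k => μ (A ∩ T^[n k] ⁻¹' A)) atTop ↔
      Tendsto (fun k => μ (A \ T^[n k] ⁻¹' A)) atTop (𝓝 0) := by
  have hsdiff : ∀ k, μ (A \ T^[n k] ⁻¹' A) = μ A - μ (A ∩ T^[n k] ⁻¹' A) := fun k =>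
    ENNReal.eq_sub_of_add_eq (measure_ne_top _ _)
      (measure_sdiff_add_inter A (hT.iterate (n k) hA))
  have hle : ∀ k, μ (A ∩ T^[n k] ⁻¹' A) ≤ μ A := fun k => measure_mono inter_subset_left
  simp_rw [hsdiff]
  constructor
  · intro h
    have hlim : Tendsto (fun k => μ (A ∩ T^[n k] ⁻¹' A)) atTop (𝓝 (μ A)) :=
      tendsto_of_le_liminf_of_limsup_le h (limsup_le_of_le (by isBoundedDefault)
        (Eventually.of_forall hle))
    simpa using ENNReal.Tendsto.sub tendsto_const_nhds hlim (.inl (measure_ne_top μ A))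
  · intro h
    have hlim := ENNReal.Tendsto.sub tendsto_const_nhds h (.inl (measure_ne_top μ A))
    simp only [tsub_zero, ENNReal.sub_sub_cancel (measure_ne_top μ A) (hle _)] at hlim
    exact hlim.liminf_eq.ge

theorem isPartiallyRigidSeq_one_iff [IsFiniteMeasure μ] (hT : Measurable T) {n : ℕ → ℕ} :
    IsPartiallyRigidSeq μ T 1 n ↔ StrictMono n ∧ 0 < n 0 ∧
      ∀ A, MeasurableSet A → Tendsto (fun k => μ (A \ T^[n k] ⁻¹' A)) atTop (𝓝 0) := by
  simp only [IsPartiallyRigidSeq, ENNReal.ofReal_one, one_mul]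
  refine and_congr_right' (and_congr_right' (forall₂_congr fun A hA => ?_))
  exact le_liminf_measure_inter_preimage_iff hT hA

theorem measure_sdiff_preimage_iterate_add_le (hT : MeasurePreserving T μ μ) {A : Set X}
    (hA : MeasurableSet A) (p q : ℕ) :
    μ (A \ T^[p + q] ⁻¹' A) ≤ μ (A \ T^[p] ⁻¹' A) + μ (A \ T^[q] ⁻¹' A) := by
  have hsub : A \ T^[p + q] ⁻¹' A ⊆ (A \ T^[q] ⁻¹' A) ∪ T^[q] ⁻¹' (A \ T^[p] ⁻¹' A) := by
    intro x ⟨hx, hpq⟩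
    by_cases hq : T^[q] x ∈ A
    · exact .inr ⟨hq, by rwa [mem_preimage, ← Function.iterate_add_apply]⟩
    · exact .inl ⟨hx, hq⟩
  calc μ (A \ T^[p + q] ⁻¹' A)
      ≤ μ (A \ T^[q] ⁻¹' A) + μ (T^[q] ⁻¹' (A \ T^[p] ⁻¹' A)) :=
        (measure_mono hsub).trans (measure_union_le _ _)
    _ = μ (A \ T^[p] ⁻¹' A) + μ (A \ T^[q] ⁻¹' A) := by
        rw [(hT.iterate q).measure_preimage
          (hA.diff (hT.measurable.iterate p hA)).nullMeasurableSet, add_comm]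

theorem measure_sdiff_preimage_iterate_mul_eq_zero (hT : MeasurePreserving T μ μ)
    {A : Set X} (hA : MeasurableSet A) {p : ℕ} (hp : μ (A \ T^[p] ⁻¹' A) = 0) (k : ℕ) :
    μ (A \ T^[k * p] ⁻¹' A) = 0 := by
  induction k with
  | zero => simp
  | succ k ih =>
    rw [add_one_mul]
    exact nonpos_iff_eq_zero.1 <| (measure_sdiff_preimage_iterate_add_le hT hA _ _).trans_eq
      (by rw [ih, hp, add_zero])

theorem isPartiallyRigid_one_of_tendsto [IsFiniteMeasure μ] (hT : MeasurePreserving T μ μ)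
    {m : ℕ → ℕ} (hm : ∀ j, 0 < m j)
    (h : ∀ A, MeasurableSet A → Tendsto (fun j => μ (A \ T^[m j] ⁻¹' A)) atTop (𝓝 0)) :
    IsPartiallyRigid μ T 1 := by
  by_cases hm_top : Tendsto m atTop atTop
  · obtain ⟨φ, hφ, hmφ⟩ := strictMono_subseq_of_tendsto_atTop hm_top
    exact ⟨m ∘ φ, (isPartiallyRigidSeq_one_iff hT.measurable).2
      ⟨hmφ, hm _, fun A hA => (h A hA).comp hφ.tendsto_atTop⟩⟩
  -- Otherwise some return time `p` occurs infinitely often, so `T^[p]` fixes every set mod `μ`.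
  obtain ⟨b, hb⟩ : ∃ b, ∃ᶠ j in atTop, m j < b := by
    simpa [tendsto_atTop, frequently_atTop] using hm_top
  obtain ⟨p, -, hp⟩ : ∃ p ∈ Finset.range b, ∃ᶠ j in atTop, m j = p := by
    rw [← frequently_exists_finset]
    exact hb.mono fun j hj => ⟨m j, Finset.mem_range.2 hj, rfl⟩
  have hp_pos : 0 < p := by
    obtain ⟨j, hj⟩ := hp.exists
    exact hj ▸ hm j
  have hfix : ∀ A, MeasurableSet A → μ (A \ T^[p] ⁻¹' A) = 0 := fun A hA =>
    tendsto_nhds_unique_of_frequently_eq tendsto_const_nhds (h A hA)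
      (hp.mono fun j hj => by rw [hj])
  refine ⟨fun k => (k + 1) * p, (isPartiallyRigidSeq_one_iff hT.measurable).2
    ⟨fun k l hkl => (Nat.mul_lt_mul_right hp_pos).2 (by omega), by simpa using hp_pos,
      fun A hA => ?_⟩⟩
  simp only [measure_sdiff_preimage_iterate_mul_eq_zero hT hA (hfix A hA)]
  exact tendsto_const_nhds

end Rigidity

namespace KRPartition

variable {X : Type*} [MeasurableSpace X] {T : X → X} (P : KRPartition X T)

theorem exists_mem_floor (x : X) : ∃ a, ∃ j < P.h a, x ∈ T^[j] '' P.B a := by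
  have hx : x ∈ ⋃ a, ⋃ j ∈ Finset.range (P.h a), T^[j] '' P.B a := P.cover ▸ mem_univ x
  simpa using hx

theorem eq_of_mem_floor {a a' : Fin P.d} {j j' : ℕ} (hj : j < P.h a) (hj' : j' < P.h a')
    {x : X} (hx : x ∈ T^[j] '' P.B a) (hx' : x ∈ T^[j'] '' P.B a') : a = a' ∧ j = j' := by
  by_contra hne
  exact disjoint_left.1 (P.disj a a' j j' hj hj' (by simpa [Prod.ext_iff] using hne)) hx hx'

theorem exists_iterate_height_mem (hT : Function.Injective T) {a : Fin P.d} {x : X}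
    (hx : x ∈ P.B a) : ∃ b, T^[P.h a] x ∈ P.B b := by
  obtain ⟨b, j, hj, y, hy, hyx⟩ := P.exists_mem_floor (T^[P.h a] x)
  obtain _ | j := j
  · exact ⟨b, by simpa [← hyx] using hy⟩
  exfalso
  obtain ⟨g, hg⟩ : ∃ g, P.h a = g + 1 := Nat.exists_eq_add_one.2 (P.h_pos a)
  rw [hg, Function.iterate_succ_apply', Function.iterate_succ_apply'] at hyx
  have h1 : T^[j] y ∈ T^[j] '' P.B b := mem_image_of_mem _ hy
  have h2 : T^[j] y ∈ T^[g] '' P.B a := hT hyx ▸ mem_image_of_mem _ hx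
  obtain ⟨rfl, rfl⟩ := P.eq_of_mem_floor (by omega) (by omega) h1 h2
  omega

theorem mem_wordBase_cons {a : Fin P.d} {u : List (Fin P.d)} {x : X} :
    x ∈ P.wordBase (a :: u) ↔ x ∈ P.B a ∧ T^[P.h a] x ∈ P.wordBase u := by
  simp only [wordBase, Set.mem_ofPred_eq, Fin.forall_fin_succ, List.length_cons]
  simp [List.take_succ_cons, Function.iterate_add_apply, add_comm]

theorem mem_wordBase_singleton {b : Fin P.d} {x : X} : x ∈ P.wordBase [b] ↔ x ∈ P.B b := by
  simp [wordBase]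

theorem wordSum_cons {a : Fin P.d} {u : List (Fin P.d)} (hu : u ≠ []) :
    P.wordSum (a :: u) = P.h a + P.wordSum u := by
  simp [wordSum, List.dropLast_cons_of_ne_nil hu]

theorem wordSum_pos {u : List (Fin P.d)} (hu : 2 ≤ u.length) : 0 < P.wordSum u := by
  obtain _ | ⟨a, _ | ⟨b, v⟩⟩ := u
  · simp at hu
  · simp at hu
  · rw [P.wordSum_cons (List.cons_ne_nil b v)]
    exact Nat.add_pos_left (P.h_pos a) _

/-- `u` is the itinerary of `x` through the towers up to time `m`. -/
theorem exists_word_of_iterate_mem (hT : Function.Injective T) {m : ℕ} (hm : 0 < m)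
    {a b : Fin P.d} {x : X} (hx : x ∈ P.B a) (hmx : T^[m] x ∈ P.B b) :
    ∃ u : List (Fin P.d), 2 ≤ u.length ∧ u.head? = some a ∧ u.getLast? = some b ∧
      P.wordSum u = m ∧ x ∈ P.wordBase u := by
  induction m using Nat.strong_induction_on generalizing a x with
  | _ m ih =>
  have hm_ge : P.h a ≤ m := by
    by_contra! hlt
    have h1 : T^[m] x ∈ T^[m] '' P.B a := mem_image_of_mem _ hx
    have h2 : T^[m] x ∈ T^[0] '' P.B b := by simpa using hmx
    have := (P.eq_of_mem_floor hlt (P.h_pos b) h1 h2).2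
    omega
  obtain heq | hlt := hm_ge.eq_or_lt
  · refine ⟨[a, b], le_rfl, rfl, rfl, by simp [wordSum, heq], ?_⟩
    rw [P.mem_wordBase_cons, P.mem_wordBase_singleton, heq]
    exact ⟨hx, hmx⟩
  obtain ⟨a', ha'⟩ := P.exists_iterate_height_mem hT hx
  have hrest : T^[m - P.h a] (T^[P.h a] x) = T^[m] x := by
    rw [← Function.iterate_add_apply, Nat.sub_add_cancel hm_ge]
  obtain ⟨u, hlen, hhead, hlast, hsum, hu⟩ :=
    ih (m - P.h a) (by have := P.h_pos a; omega) (by omega) ha' (hrest ▸ hmx)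
  have hu_ne : u ≠ [] := by rintro rfl; simp at hlen
  refine ⟨a :: u, by simp; omega, rfl, ?_, ?_, P.mem_wordBase_cons.2 ⟨hx, hu⟩⟩
  · rwa [List.getLast?_cons_of_ne_nil hu_ne]
  · rw [P.wordSum_cons hu_ne, hsum]; omega

theorem iterate_wordSum_mem_of_mem_wordBase {u : List (Fin P.d)} (hu : u ≠ []) {x : X}
    (hx : x ∈ P.wordBase u) : T^[P.wordSum u] x ∈ P.B (u.getLast hu) := by
  induction u generalizing x with
  | nil => exact absurd rfl hu
  | cons a v ih =>
    obtain rfl | hv := eq_or_ne v []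
    · simpa [wordSum] using P.mem_wordBase_singleton.1 hx
    rw [P.wordSum_cons hv, add_comm, Function.iterate_add_apply, List.getLast_cons hv]
    exact ih hv (P.mem_wordBase_cons.1 hx).2

def returnSet (m : ℕ) : Set X :=
  ⋃ a, ⋃ j ∈ Finset.range (P.h a), T^[j] '' P.B a ∩ T^[m] ⁻¹' (T^[j] '' P.B a)

theorem mem_returnSet {m : ℕ} {x : X} : x ∈ P.returnSet m ↔
    ∃ a, ∃ j < P.h a, x ∈ T^[j] '' P.B a ∧ T^[m] x ∈ T^[j] '' P.B a := by
  simp only [returnSet, mem_iUnion, Finset.mem_range, mem_inter_iff, mem_preimage, exists_prop]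

theorem classTower_subset_returnSet (w : List (Fin P.d)) :
    P.classTower w ⊆ P.returnSet (P.wordSum w) := by
  simp only [classTower, wordTower, Set.mem_ofPred_eq, subset_def, mem_iUnion, Finset.mem_range]
  rintro _ ⟨u, ⟨⟨hlen, hcompl⟩, hsum⟩, j, hj, z, hz, rfl⟩
  obtain _ | ⟨a, v⟩ := u
  · simp at hlen
  have hlast : (a :: v).getLast (List.cons_ne_nil a v) = a := by
    simpa [List.getLast?_eq_some_getLast] using hcompl.symm
  have hz_last := P.iterate_wordSum_mem_of_mem_wordBase (List.cons_ne_nil a v) hz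
  rw [hlast, hsum] at hz_last
  refine P.mem_returnSet.2
    ⟨a, j, by simpa using hj, mem_image_of_mem _ (P.mem_wordBase_cons.1 hz).1, ?_⟩
  rw [← Function.iterate_add_apply, add_comm, Function.iterate_add_apply]
  exact mem_image_of_mem _ hz_last

theorem exists_wordTower_of_mem_returnSet (hT : Function.Injective T) {m : ℕ} (hm : 0 < m)
    {x : X} (hx : x ∈ P.returnSet m) :
    ∃ u, IsCompleteWord u ∧ P.wordSum u = m ∧ x ∈ P.wordTower u := by
  obtain ⟨a, j, hj, ⟨y, hy, rfl⟩, y', hy', hyy'⟩ := P.mem_returnSet.1 hx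
  have hmy : T^[m] y = y' := by
    apply hT.iterate j
    rw [hyy', ← Function.iterate_add_apply, add_comm, Function.iterate_add_apply]
  obtain ⟨u, hlen, hhead, hlast, hsum, hu⟩ :=
    P.exists_word_of_iterate_mem hT hm hy (hmy ▸ hy')
  refine ⟨u, ⟨hlen, hhead.trans hlast.symm⟩, hsum, ?_⟩
  obtain _ | ⟨c, v⟩ := u
  · simp at hlen
  obtain rfl : c = a := by simpa using hhead
  simp only [wordTower, mem_iUnion, Finset.mem_range]
  exact ⟨j, by simpa using hj, mem_image_of_mem _ hu⟩

theorem classTower_eq_returnSet (hT : Function.Injective T) {w : List (Fin P.d)}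
    (hw : IsCompleteWord w) : P.classTower w = P.returnSet (P.wordSum w) := by
  refine (P.classTower_subset_returnSet w).antisymm fun x hx => ?_
  obtain ⟨u, hu, hsum, hxu⟩ := P.exists_wordTower_of_mem_returnSet hT (P.wordSum_pos hw.1) hx
  exact mem_biUnion (x := u) ⟨hu, hsum⟩ hxu

theorem exists_classTower_eq_returnSet (hT : Function.Injective T) {m : ℕ} (hm : 0 < m)
    (hne : (P.returnSet m).Nonempty) :
    ∃ w, IsCompleteWord w ∧ P.classTower w = P.returnSet m := by
  obtain ⟨x, hx⟩ := hne
  obtain ⟨w, hw, hsum, -⟩ := P.exists_wordTower_of_mem_returnSet hT hm hx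
  exact ⟨w, hw, hsum ▸ P.classTower_eq_returnSet hT hw⟩

theorem measurableSet_floor (hT : MeasurableEmbedding T) (a : Fin P.d) (j : ℕ) :
    MeasurableSet (T^[j] '' P.B a) :=
  (hT.iterate j).measurableSet_image.2 (P.meas a)

theorem IsAtom.measurableSet {P : KRPartition X T} (hT : MeasurableEmbedding T) {s : Set X}
    (hs : P.IsAtom s) : MeasurableSet s := by
  obtain ⟨a, j, -, rfl⟩ := hs
  exact P.measurableSet_floor hT a j

theorem IsAtom.eq_of_mem {P : KRPartition X T} {s t : Set X} (hs : P.IsAtom s)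
    (ht : P.IsAtom t) {x : X} (hxs : x ∈ s) (hxt : x ∈ t) : s = t := by
  obtain ⟨a, j, hj, rfl⟩ := hs
  obtain ⟨a', j', hj', rfl⟩ := ht
  obtain ⟨rfl, rfl⟩ := P.eq_of_mem_floor hj hj' hxs hxt
  rfl

theorem measurableSet_returnSet (hT : MeasurableEmbedding T) (m : ℕ) :
    MeasurableSet (P.returnSet m) :=
  .iUnion fun a => .biUnion (to_countable _) fun j _ =>
    (P.measurableSet_floor hT a j).inter
      (hT.measurable.iterate m (P.measurableSet_floor hT a j))

theorem measure_compl_returnSet_le (μ : Measure X) (m : ℕ) :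
    μ (P.returnSet m)ᶜ ≤ ∑ a, ∑ j ∈ Finset.range (P.h a),
      μ (T^[j] '' P.B a \ T^[m] ⁻¹' (T^[j] '' P.B a)) := by
  have hsub : (P.returnSet m)ᶜ ⊆ ⋃ a, ⋃ j ∈ Finset.range (P.h a),
      T^[j] '' P.B a \ T^[m] ⁻¹' (T^[j] '' P.B a) := by
    intro x hx
    obtain ⟨a, j, hj, hxj⟩ := P.exists_mem_floor x
    simp only [mem_iUnion, Finset.mem_range]
    exact ⟨a, j, hj, hxj, fun h => hx (P.mem_returnSet.2 ⟨a, j, hj, hxj, h⟩)⟩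
  refine (measure_mono hsub).trans ((measure_iUnion_fintype_le μ _).trans ?_)
  exact Finset.sum_le_sum fun a _ => measure_biUnion_finset_le _ _

theorem tendsto_measure_compl_returnSet {μ : Measure X} (hT : MeasurableEmbedding T)
    {n : ℕ → ℕ}
    (hn : ∀ A, MeasurableSet A → Tendsto (fun k => μ (A \ T^[n k] ⁻¹' A)) atTop (𝓝 0)) :
    Tendsto (fun k => μ (P.returnSet (n k))ᶜ) atTop (𝓝 0) := by
  have hsum : Tendsto (fun k => ∑ a, ∑ j ∈ Finset.range (P.h a),
      μ (T^[j] '' P.B a \ T^[n k] ⁻¹' (T^[j] '' P.B a))) atTop (𝓝 0) := by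
    simpa using tendsto_finsetSum _ fun a _ => tendsto_finsetSum _ fun j _ =>
      hn _ (P.measurableSet_floor hT a j)
  exact tendsto_of_tendsto_of_tendsto_of_le_of_le tendsto_const_nhds hsum
    (fun _ => zero_le) fun k => P.measure_compl_returnSet_le μ (n k)

theorem exists_isCompleteWord_measure_compl_classTower_lt {μ : Measure X}
    [IsProbabilityMeasure μ] (hT : MeasurableEmbedding T) {n : ℕ → ℕ} (hn_pos : ∀ k, 0 < n k)
    (hn : ∀ A, MeasurableSet A → Tendsto (fun k => μ (A \ T^[n k] ⁻¹' A)) atTop (𝓝 0))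
    {ε : ℝ≥0∞} (hε : 0 < ε) (hε_le : ε ≤ 1) :
    ∃ w, IsCompleteWord w ∧ μ (P.classTower w)ᶜ < ε := by
  obtain ⟨k, hk⟩ := ((P.tendsto_measure_compl_returnSet hT hn).eventually_lt_const hε).exists
  have hne : (P.returnSet (n k)).Nonempty := by
    by_contra! h
    rw [h, compl_empty, measure_univ] at hk
    exact hk.not_ge hε_le
  obtain ⟨w, hw, hwR⟩ := P.exists_classTower_eq_returnSet hT.injective (hn_pos k) hne
  exact ⟨w, hw, hwR ▸ hk⟩

def IsSaturated (S : Set X) : Prop :=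
  ∀ s, P.IsAtom s → ∀ x ∈ s, x ∈ S → s ⊆ S

variable {P}

theorem IsSaturated.union {S S' : Set X} (hS : P.IsSaturated S) (hS' : P.IsSaturated S') :
    P.IsSaturated (S ∪ S') := by
  rintro s hs x hxs (hx | hx)
  · exact (hS s hs x hxs hx).trans subset_union_left
  · exact (hS' s hs x hxs hx).trans subset_union_right

theorem IsSaturated.sdiff {S S' : Set X} (hS : P.IsSaturated S) (hS' : P.IsSaturated S') :
    P.IsSaturated (S \ S') := by
  rintro s hs x hxs ⟨hx, hx'⟩ y hys
  exact ⟨hS s hs x hxs hx hys, fun hy => hx' (hS' s hs y hys hy hxs)⟩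

theorem IsSaturated.sdiff_preimage_subset {S : Set X} (hS : P.IsSaturated S) (m : ℕ) :
    S \ T^[m] ⁻¹' S ⊆ (P.returnSet m)ᶜ := by
  rintro x ⟨hx, hmx⟩ hR
  obtain ⟨a, j, hj, hxj, hmxj⟩ := P.mem_returnSet.1 hR
  exact hmx (hS _ ⟨a, j, hj, rfl⟩ x hxj hx hmxj)

end KRPartition

namespace KRSequence

variable {X : Type*} [MeasurableSpace X] {μ : Measure X} {T : X → X} (K : KRSequence X μ T)

theorem exists_atom_superset_of_le {N n : ℕ} (hNn : N ≤ n) {s : Set X}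
    (hs : (K.P n).IsAtom s) : ∃ t, (K.P N).IsAtom t ∧ s ⊆ t := by
  induction n, hNn using Nat.le_induction generalizing s with
  | base => exact ⟨s, hs, subset_rfl⟩
  | succ n _ ih =>
    obtain ⟨t, ht, hst⟩ := K.kr2 n s hs
    obtain ⟨t', ht', htt'⟩ := ih ht
    exact ⟨t', ht', hst.trans htt'⟩

theorem isSaturated_of_le {N n : ℕ} (hNn : N ≤ n) {S : Set X} (hS : (K.P N).IsSaturated S) :
    (K.P n).IsSaturated S := by
  intro s hs x hxs hx
  obtain ⟨t, ht, hst⟩ := K.exists_atom_superset_of_le hNn hs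
  exact hst.trans (hS t ht x (hst hxs) hx)

def saturatedSets : Set (Set X) :=
  {S | MeasurableSet S ∧ ∃ N, (K.P N).IsSaturated S}

theorem isSetRing_saturatedSets : IsSetRing K.saturatedSets where
  empty_mem := ⟨.empty, 0, fun _ _ _ _ h => h.elim⟩
  union_mem := by
    rintro S S' ⟨hS, N, hSN⟩ ⟨hS', N', hSN'⟩
    exact ⟨hS.union hS', max N N', (K.isSaturated_of_le (le_max_left N N') hSN).union
      (K.isSaturated_of_le (le_max_right N N') hSN')⟩
  sdiff_mem := by
    rintro S S' ⟨hS, N, hSN⟩ ⟨hS', N', hSN'⟩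
    exact ⟨hS.diff hS', max N N', (K.isSaturated_of_le (le_max_left N N') hSN).sdiff
      (K.isSaturated_of_le (le_max_right N N') hSN')⟩

theorem generateFrom_saturatedSets (hT : MeasurableEmbedding T) :
    MeasurableSpace.generateFrom K.saturatedSets = ‹MeasurableSpace X› := by
  refine le_antisymm (MeasurableSpace.generateFrom_le fun S hS => hS.1) ?_
  conv_lhs => rw [← K.kr4]
  refine MeasurableSpace.generateFrom_mono ?_
  rintro s ⟨n, hs⟩
  exact ⟨hs.measurableSet hT, n, fun t ht x hxt hxs => (ht.eq_of_mem hs hxt hxs).le⟩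

theorem tendsto_measure_sdiff_preimage [IsFiniteMeasure μ] (hT : MeasurePreserving T μ μ)
    (hTe : MeasurableEmbedding T) {ℓ m : ℕ → ℕ} (hℓ : Tendsto ℓ atTop atTop)
    (hR : Tendsto (fun j => μ ((K.P (ℓ j)).returnSet (m j))ᶜ) atTop (𝓝 0))
    {A : Set X} (hA : MeasurableSet A) :
    Tendsto (fun j => μ (A \ T^[m j] ⁻¹' A)) atTop (𝓝 0) := by
  -- Approximate `A` by a union `S` of atoms of some level `N`; at finer levels, `S` can only be
  -- left by points that leave their floor.
  rw [ENNReal.tendsto_nhds_zero]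
  intro ε hε
  have hε2 : 0 < ε / 2 := ENNReal.half_pos hε.ne'
  obtain ⟨S, ⟨hS, N, hSN⟩, hSA⟩ :=
    exists_measure_symmDiff_lt_of_generateFrom_isSetRing (μ := μ) K.isSetRing_saturatedSets
    ⟨{univ}, countable_singleton _, by simpa using ⟨.univ, 0, fun _ _ _ _ _ => subset_univ _⟩,
      by simp⟩
    (K.generateFrom_saturatedSets hTe).symm hA hε2
  filter_upwards [hℓ.eventually_ge_atTop N, ENNReal.tendsto_nhds_zero.1 hR _ hε2]
    with j hj hRj
  calc μ (A \ T^[m j] ⁻¹' A) ≤ μ (S \ T^[m j] ⁻¹' S) + μ (S ∆ A) :=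
        measure_sdiff_preimage_le_add_symmDiff (hT.iterate _) hA hS
    _ ≤ μ ((K.P (ℓ j)).returnSet (m j))ᶜ + ε / 2 :=
        add_le_add (measure_mono ((K.isSaturated_of_le hj hSN).sdiff_preimage_subset _)) hSA.le
    _ ≤ ε := by grw [hRj, ENNReal.add_halves]

end KRSequence

theorem kr_characterization_of_rigidity_general
    {X : Type*} [MeasurableSpace X]
    (μ : Measure X) [IsProbabilityMeasure μ] (T : X → X)
    (herg : Ergodic T μ)
    (hinv : ∃ Tinv : X → X, Measurable Tinv ∧
      Function.LeftInverse Tinv T ∧ Function.RightInverse Tinv T)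
    (K : KRSequence X μ T) :
    IsPartiallyRigid μ T 1 ↔
      ∃ w : (n : ℕ) → List (Fin (K.P n).d),
        (∀ n, IsCompleteWord (w n)) ∧
        Filter.limsup (fun n => μ ((K.P n).classTower (w n))) Filter.atTop = 1 := by
  obtain ⟨Tinv, hTinv, hL, hR⟩ := hinv
  have hT : MeasurePreserving T μ μ := herg.toMeasurePreserving
  have hTe : MeasurableEmbedding T :=
    .of_measurable_inverse hT.measurable (hR.surjective.range_eq ▸ .univ) hTinv hL
  have hC : ∀ n w, IsCompleteWord w → MeasurableSet ((K.P n).classTower w) := fun n w hw =>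
    (K.P n).classTower_eq_returnSet hTe.injective hw ▸ (K.P n).measurableSet_returnSet hTe _
  constructor
  · rintro ⟨r, hr⟩
    obtain ⟨hr_mono, hr0, hr_tendsto⟩ := (isPartiallyRigidSeq_one_iff hT.measurable).1 hr
    choose w hw hwμ using fun n : ℕ =>
      (K.P n).exists_isCompleteWord_measure_compl_classTower_lt hTe
        (fun k => hr0.trans_le (hr_mono.monotone k.zero_le)) hr_tendsto
        (ε := ((n + 1 : ℕ) : ℝ≥0∞)⁻¹) (by simp) (ENNReal.inv_le_one.2 (by simp))
    have hcompl : Tendsto (fun n => μ ((K.P n).classTower (w n))ᶜ) atTop (𝓝 0) :=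
      tendsto_of_tendsto_of_tendsto_of_le_of_le tendsto_const_nhds
        (ENNReal.tendsto_inv_nat_nhds_zero.comp (tendsto_add_atTop_nat 1))
        (fun _ => zero_le) fun n => (hwμ n).le
    exact ⟨w, hw, ((tendsto_measure_iff_tendsto_measure_compl fun n => hC n _ (hw n)).2
      hcompl).limsup_eq⟩
  · rintro ⟨w, hw, hlim⟩
    obtain ⟨ℓ, hμ, hℓ⟩ :=
      exists_seq_tendsto_limsup (u := fun n => μ ((K.P n).classTower (w n))) (f := atTop)
    have hreturn := (tendsto_measure_iff_tendsto_measure_compl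
      (s := fun j => (K.P (ℓ j)).classTower (w (ℓ j))) fun j => hC _ _ (hw (ℓ j))).1 (hlim ▸ hμ)
    simp only [(K.P _).classTower_eq_returnSet hTe.injective (hw _)] at hreturn
    exact isPartiallyRigid_one_of_tendsto hT (fun j => (K.P (ℓ j)).wordSum_pos (hw (ℓ j)).1)
      fun A hA => K.tendsto_measure_sdiff_preimage hT hTe hℓ hreturn hA

/-- Rigidity characterization: the system is rigid (1-rigid) iff there is a sequence of
complete words `(w(n))ₙ` with `limsup_n μ(𝒯⁽ⁿ⁾_{[w(n)]ₙ}) = 1`. -/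
theorem kr_characterization_of_rigidity
    {X : Type*} [MeasurableSpace X] [StandardBorelSpace X]
    (μ : Measure X) [IsProbabilityMeasure μ] (T : X → X)
    (herg : Ergodic T μ)
    (hinv : ∃ Tinv : X → X, Measurable Tinv ∧
      Function.LeftInverse Tinv T ∧ Function.RightInverse Tinv T)
    (hna : ∀ x : X, μ {x} = 0)
    (K : KRSequence X μ T) :
    IsPartiallyRigid μ T 1 ↔
      ∃ w : (n : ℕ) → List (Fin (K.P n).d),
        (∀ n, IsCompleteWord (w n)) ∧
        Filter.limsup (fun n => μ ((K.P n).classTower (w n))) Filter.atTop = 1 :=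
  kr_characterization_of_rigidity_general μ T herg hinv K
end

section
/- Let (X, 𝒳, μ, T) be a measure-preserving system and n ≥ 1. Then the n-fold product system (Xⁿ, 𝒳^{⊗n}, μ^{⊗n}, T × ⋯ × T) satisfies δ_{μ^{⊗n}} = (δ_μ)ⁿ. -/
open MeasureTheory Filter Set

/-!
Along a fixed sequence `(m_k)`, `γ`-rigidity of `T` passes to `T × ⋯ × T` with constant `γⁿ`.
On a box the return measure `μ^{⊗n}(B ∩ S^{-m_k} B)` factorises, so its liminf is at least the
product of the factors' liminfs. The rigidity inequality survives finite disjoint unions and,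
because `T` preserves `μ`, approximation in measure; finite disjoint unions of boxes are dense in
the product σ-algebra. Conversely, testing `γ`-rigidity of the product on a cube `Aⁿ` gives
`γ μ(A)ⁿ ≤ (liminf μ(A ∩ T^{-m_k} A))ⁿ`, i.e. `γ^{1/n}`-rigidity of `T`. So the rigidity constants
of the product are the `n`-th powers of those of `T`, and `γ ↦ γⁿ` commutes with suprema.
-/

open scoped ENNReal symmDiff

namespace ENNReal

lemma sum_liminf_le_liminf_sum {ι : Type*} (s : Finset ι) (u : ι → ℕ → ℝ≥0∞) :
    ∑ i ∈ s, liminf (u i) atTop ≤ liminf (fun k => ∑ i ∈ s, u i k) atTop := by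
  simp only [liminf_eq_iSup_iInf_of_nat]
  rw [ENNReal.finsetSum_iSup_of_monotone fun i a b hab =>
    le_iInf₂ fun j hj => iInf₂_le j (hab.trans hj)]
  exact iSup_mono fun n => le_iInf₂ fun j hj => Finset.sum_le_sum fun i _ => iInf₂_le j hj

lemma prod_liminf_le_liminf_prod {ι β : Type*} {f : Filter β} (s : Finset ι)
    (u : ι → β → ℝ≥0∞) : ∏ i ∈ s, liminf (u i) f ≤ liminf (fun b => ∏ i ∈ s, u i b) f := by
  classical
  induction s using Finset.induction_on with
  | empty => exact le_liminf_of_le (by isBoundedDefault) (.of_forall fun _ => le_rfl)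
  | insert a s ha ih =>
    simp only [Finset.prod_insert ha]
    exact (mul_le_mul_right ih _).trans
      (le_liminf_mul (u := u a) (v := fun b => ∏ i ∈ s, u i b))

end ENNReal

lemma Set.univ_pi_inter_preimage_piMap {ι : Type*} {α : ι → Type*} (T : ∀ i, α i → α i)
    (A B : ∀ i, Set (α i)) :
    univ.pi A ∩ Pi.map T ⁻¹' univ.pi B = univ.pi fun i => A i ∩ T i ⁻¹' B i := by
  ext x
  simp [forall_and]

lemma Real.sSup_image_pow {S : Set ℝ} (hS : S ⊆ Ici 0) (hSb : BddAbove S) {n : ℕ} (hn : n ≠ 0) :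
    sSup ((· ^ n) '' S) = sSup S ^ n := by
  rcases S.eq_empty_or_nonempty with rfl | hne
  · simp [zero_pow hn]
  · exact (MonotoneOn.map_csSup_of_continuousWithinAt (continuous_pow n).continuousWithinAt
      (fun x hx y hy hxy => pow_le_pow_left₀ (hS hx) hxy n) hne hSb).symm

section IsRigidSet

variable {α : Type*} [MeasurableSpace α]

/-- `IsPartiallyRigidSeq μ T γ m` asks this of every measurable set, with `c = ENNReal.ofReal γ`. -/
def IsRigidSet (μ : Measure α) (T : α → α) (c : ℝ≥0∞) (m : ℕ → ℕ) (A : Set α) : Prop :=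
  c * μ A ≤ liminf (fun k => μ (A ∩ T^[m k] ⁻¹' A)) atTop

variable {μ : Measure α} {T : α → α} {c : ℝ≥0∞} {m : ℕ → ℕ}

lemma measure_sUnion_inter_finset {I : Finset (Set α)} (hI : (I : Set (Set α)).PairwiseDisjoint id)
    (hIm : ∀ s ∈ I, MeasurableSet s) (E : Set α) :
    μ (⋃₀ I ∩ E) = ∑ s ∈ I, μ (s ∩ E) := by
  rw [sUnion_eq_biUnion, Finset.set_biUnion_coe,
    ← Measure.restrict_apply (Finset.measurableSet_biUnion I hIm)]
  exact (measure_biUnion_finset (f := id) hI hIm).trans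
    (Finset.sum_congr rfl fun s hs => Measure.restrict_apply (hIm s hs))

lemma isRigidSet_sUnion {I : Finset (Set α)} (hI : (I : Set (Set α)).PairwiseDisjoint id)
    (hIm : ∀ s ∈ I, MeasurableSet s) (hIr : ∀ s ∈ I, IsRigidSet μ T c m s) :
    IsRigidSet μ T c m (⋃₀ I) := by
  have hpieces (p : ℕ) : ∑ s ∈ I, μ (s ∩ T^[p] ⁻¹' s) ≤ μ (⋃₀ I ∩ T^[p] ⁻¹' ⋃₀ I) := by
    rw [measure_sUnion_inter_finset hI hIm]
    exact Finset.sum_le_sum fun s hs =>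
      measure_mono (inter_subset_inter_right _ (preimage_mono (subset_sUnion_of_mem hs)))
  calc c * μ (⋃₀ I) = ∑ s ∈ I, c * μ s := by
        simpa [Finset.mul_sum] using congrArg (c * ·) (measure_sUnion_inter_finset hI hIm univ)
    _ ≤ ∑ s ∈ I, liminf (fun k => μ (s ∩ T^[m k] ⁻¹' s)) atTop := Finset.sum_le_sum hIr
    _ ≤ liminf (fun k => ∑ s ∈ I, μ (s ∩ T^[m k] ⁻¹' s)) atTop :=
        ENNReal.sum_liminf_le_liminf_sum _ _
    _ ≤ _ := liminf_le_liminf (.of_forall fun k => hpieces (m k))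

lemma IsRigidSet.mul_le_liminf_add (hT : MeasurePreserving T μ μ) (hc : c ≤ 1) {A B : Set α}
    (hA : MeasurableSet A) (hB : MeasurableSet B) (hBr : IsRigidSet μ T c m B) :
    c * μ A ≤ liminf (fun k => μ (A ∩ T^[m k] ⁻¹' A)) atTop + 3 * μ (A ∆ B) := by
  set d := μ (A ∆ B)
  have hreturn (p : ℕ) : μ (B ∩ T^[p] ⁻¹' B) ≤ μ (A ∩ T^[p] ⁻¹' A) + 2 * d := by
    have hpre : μ (T^[p] ⁻¹' (A ∆ B)) = d :=
      (hT.iterate p).measure_preimage (hA.symmDiff hB).nullMeasurableSet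
    calc μ (B ∩ T^[p] ⁻¹' B) ≤ μ (A ∩ T^[p] ⁻¹' A ∪ A ∆ B ∪ T^[p] ⁻¹' (A ∆ B)) := by
          refine measure_mono fun x hx => ?_
          simp only [mem_union, mem_inter_iff, mem_preimage, mem_symmDiff] at hx ⊢
          tauto
      _ ≤ μ (A ∩ T^[p] ⁻¹' A ∪ A ∆ B) + μ (T^[p] ⁻¹' (A ∆ B)) := measure_union_le _ _
      _ ≤ μ (A ∩ T^[p] ⁻¹' A) + d + d := by grw [hpre, measure_union_le]
      _ = μ (A ∩ T^[p] ⁻¹' A) + 2 * d := by ring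
  calc c * μ A ≤ c * (μ B + d) := by gcongr; exact tsub_le_iff_left.1 le_measure_symmDiff
    _ ≤ c * μ B + d := by rw [mul_add]; gcongr; exact mul_le_of_le_one_left' hc
    _ ≤ liminf (fun k => μ (B ∩ T^[m k] ⁻¹' B)) atTop + d := by gcongr; exact hBr
    _ ≤ liminf (fun k => μ (A ∩ T^[m k] ⁻¹' A) + 2 * d) atTop + d := by
        gcongr; exact liminf_le_liminf (.of_forall fun k => hreturn (m k))
    _ = _ := by rw [liminf_add_const _ _ _ (by isBoundedDefault) (by isBoundedDefault)]; ring

lemma isRigidSet_of_forall_measure_symmDiff_lt (hT : MeasurePreserving T μ μ) (hc : c ≤ 1)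
    {A : Set α} (hA : MeasurableSet A)
    (h : ∀ ε > 0, ∃ B, MeasurableSet B ∧ μ (A ∆ B) < ε ∧ IsRigidSet μ T c m B) :
    IsRigidSet μ T c m A := by
  refine ENNReal.le_of_forall_pos_le_add fun ε hε _ => ?_
  obtain ⟨B, hB, hAB, hBr⟩ := h (ε / 3) (ENNReal.div_pos (by simpa using hε.ne') (by norm_num))
  calc c * μ A ≤ liminf (fun k => μ (A ∩ T^[m k] ⁻¹' A)) atTop + 3 * (ε / 3) := by
        grw [hBr.mul_le_liminf_add hT hc hA hB, hAB]
    _ = _ := by rw [ENNReal.mul_div_cancel (by norm_num) (by norm_num)]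

end IsRigidSet

section Pi

variable {ι : Type*} [Fintype ι] {α : ι → Type*} [∀ i, MeasurableSpace (α i)]

lemma isRigidSet_univ_pi {μ : ∀ i, Measure (α i)} [∀ i, SigmaFinite (μ i)] {T : ∀ i, α i → α i}
    {c : ι → ℝ≥0∞} {m : ℕ → ℕ} {A : ∀ i, Set (α i)}
    (hA : ∀ i, IsRigidSet (μ i) (T i) (c i) m (A i)) :
    IsRigidSet (Measure.pi μ) (Pi.map T) (∏ i, c i) m (univ.pi A) := by
  unfold IsRigidSet
  simp_rw [Pi.map_iterate, univ_pi_inter_preimage_piMap, Measure.pi_pi, ← Finset.prod_mul_distrib]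
  exact (Finset.prod_le_prod' fun i _ => hA i).trans (ENNReal.prod_liminf_le_liminf_prod _ _)

lemma isSetSemiring_pi_measurableSet [Nonempty ι] :
    IsSetSemiring (univ.pi '' univ.pi fun i => {s : Set (α i) | MeasurableSet s}) where
  empty_mem := ⟨fun _ => ∅, fun _ _ => .empty, univ_pi_empty⟩
  inter_mem := by
    rintro _ ⟨A, hA, rfl⟩ _ ⟨B, hB, rfl⟩
    exact ⟨fun i => A i ∩ B i, fun i _ => (hA i trivial).inter (hB i trivial), pi_inter_distrib⟩
  sdiff_eq_sUnion' := by
    classical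
    rintro _ ⟨A, hA, rfl⟩ _ ⟨B, hB, rfl⟩
    -- `x ∈ univ.pi A \ univ.pi B` lies in the piece indexed by `{i | x i ∉ B i}`
    let piece (J : Finset ι) : Set (∀ i, α i) :=
      univ.pi fun i => if i ∈ J then A i \ B i else A i ∩ B i
    have mem_piece (J : Finset ι) (x : ∀ i, α i) :
        x ∈ piece J ↔ x ∈ univ.pi A ∧ ∀ i, x i ∉ B i ↔ i ∈ J := by
      simp only [piece, mem_univ_pi]
      constructor
      · intro h
        refine ⟨fun i => ?_, fun i => ?_⟩ <;> have := h i <;> by_cases hi : i ∈ J <;> simp_all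
      · rintro ⟨hxA, hxB⟩ i
        by_cases hi : i ∈ J
        · simp [hi, hxA i, (hxB i).2 hi]
        · simp [hi, hxA i, not_not.1 (mt (hxB i).1 hi)]
    refine ⟨(Finset.univ.filter Finset.Nonempty).image piece, ?_, ?_, ?_⟩
    · simp only [Finset.coe_image, image_subset_iff]
      intro J _
      refine ⟨_, fun i _ => ?_, rfl⟩
      split_ifs
      exacts [(hA i trivial).diff (hB i trivial), (hA i trivial).inter (hB i trivial)]
    · simp only [Finset.coe_image]
      rintro _ ⟨J, -, rfl⟩ _ ⟨K, -, rfl⟩ hJK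
      refine Set.disjoint_left.2 fun x hJ hK => hJK (congrArg piece (Finset.ext fun i => ?_))
      rw [← ((mem_piece J x).1 hJ).2 i, ((mem_piece K x).1 hK).2 i]
    · ext x
      simp only [Set.mem_sdiff, Finset.coe_image, sUnion_image, mem_iUnion, mem_piece]
      constructor
      · rintro ⟨hxA, hxB⟩
        refine ⟨Finset.univ.filter fun i => x i ∉ B i, ?_, hxA, fun i => by simp⟩
        simpa [Finset.filter_nonempty_iff, mem_univ_pi] using hxB
      · rintro ⟨J, hJ, hxA, hJx⟩
        obtain ⟨i, hi⟩ : J.Nonempty := by simpa using hJ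
        exact ⟨hxA, fun hxB => (hJx i).2 hi (hxB i trivial)⟩

lemma isRigidSet_pi [Nonempty ι] {μ : ∀ i, Measure (α i)} [∀ i, IsFiniteMeasure (μ i)]
    {T : ∀ i, α i → α i} (hT : ∀ i, MeasurePreserving (T i) (μ i) (μ i)) {c : ι → ℝ≥0∞}
    (hc : ∏ i, c i ≤ 1) {m : ℕ → ℕ}
    (h : ∀ i A, MeasurableSet A → IsRigidSet (μ i) (T i) (c i) m A) {A : Set (∀ i, α i)}
    (hA : MeasurableSet A) : IsRigidSet (Measure.pi μ) (Pi.map T) (∏ i, c i) m A := by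
  refine isRigidSet_of_forall_measure_symmDiff_lt (measurePreserving_pi μ μ hT) hc hA
    fun ε hε => ?_
  have hcover : ∃ D : Set (Set (∀ i, α i)), D.Countable ∧
      D ⊆ univ.pi '' univ.pi (fun i => {s : Set (α i) | MeasurableSet s}) ∧
      Measure.pi μ (⋃₀ D)ᶜ = 0 :=
    ⟨{univ}, countable_singleton _,
      singleton_subset_iff.2 ⟨fun _ => univ, fun _ _ => .univ, pi_univ _⟩, by simp⟩
  obtain ⟨B, hB, hAB⟩ := exists_measure_symmDiff_lt_of_generateFrom_isSetSemiring
    isSetSemiring_pi_measurableSet hcover generateFrom_pi.symm hA hε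
  obtain ⟨P, hP⟩ := isSetSemiring_pi_measurableSet.mem_supClosure_iff.1 hB
  have hPm : ∀ s ∈ P.parts, MeasurableSet s := by
    intro s hs
    obtain ⟨S, hS, rfl⟩ := hP hs
    exact .univ_pi fun i => hS i trivial
  have hPB : ⋃₀ P.parts = B := (Finset.sup_id_set_eq_sUnion _).symm.trans P.sup_parts
  refine ⟨⋃₀ P.parts, P.parts.finite_toSet.measurableSet_sUnion hPm,
    by rwa [hPB, symmDiff_comm], isRigidSet_sUnion P.disjoint hPm fun s hs => ?_⟩
  obtain ⟨S, hS, rfl⟩ := hP hs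
  exact isRigidSet_univ_pi fun i => h i _ (hS i trivial)

end Pi

section PartialRigidity

variable {X : Type*} [MeasurableSpace X] {μ : Measure X} {T : X → X} {γ : ℝ} {m : ℕ → ℕ}
  (ι : Type*) [Fintype ι] [Nonempty ι]

lemma IsPartiallyRigidSeq.pi [IsFiniteMeasure μ] (hT : MeasurePreserving T μ μ) (hγ₀ : 0 ≤ γ)
    (hγ₁ : γ ≤ 1) (h : IsPartiallyRigidSeq μ T γ m) :
    IsPartiallyRigidSeq (Measure.pi fun _ : ι => μ) (fun x i => T (x i))
      (γ ^ Fintype.card ι) m := by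
  obtain ⟨hm, hm₀, hA⟩ := h
  refine ⟨hm, hm₀, fun A hA' => ?_⟩
  have hc : ∏ _ : ι, ENNReal.ofReal γ ≤ 1 :=
    Finset.prod_le_one' fun _ _ => ENNReal.ofReal_le_one.2 hγ₁
  have := isRigidSet_pi (fun _ => hT) hc (fun _ => hA) hA'
  rwa [Finset.prod_const, Finset.card_univ, ← ENNReal.ofReal_pow hγ₀] at this

lemma IsPartiallyRigidSeq.of_pi [SigmaFinite μ] (hγ : 0 ≤ γ)
    (h : IsPartiallyRigidSeq (Measure.pi fun _ : ι => μ) (fun x i => T (x i)) γ m) :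
    IsPartiallyRigidSeq μ T (γ ^ (Fintype.card ι : ℝ)⁻¹) m := by
  obtain ⟨hm, hm₀, hA⟩ := h
  refine ⟨hm, hm₀, fun A hA' => ?_⟩
  set n := Fintype.card ι
  have hn : n ≠ 0 := Fintype.card_ne_zero
  have hbox := hA (univ.pi fun _ => A) (.univ_pi fun _ => hA')
  change _ ≤ liminf (fun k => Measure.pi _ (_ ∩ (Pi.map fun _ => T)^[m k] ⁻¹' _)) atTop at hbox
  simp_rw [Pi.map_iterate, univ_pi_inter_preimage_piMap, Measure.pi_pi, Finset.prod_const,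
    Finset.card_univ] at hbox
  rw [← (ENNReal.pow_le_pow_left_iff hn), mul_pow, ← ENNReal.ofReal_pow (by positivity),
    Real.rpow_inv_natCast_pow hγ hn]
  exact hbox.trans_eq (Monotone.map_liminf_of_continuousAt (fun a b hab => pow_le_pow_left' hab n)
    _ (ENNReal.continuous_pow n).continuousAt).symm

lemma setOf_isPartiallyRigid_pi [IsFiniteMeasure μ] (hT : MeasurePreserving T μ μ) :
    {γ : ℝ | γ ∈ Ioc 0 1 ∧ IsPartiallyRigid (Measure.pi fun _ : ι => μ) (fun x i => T (x i)) γ} =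
      (· ^ Fintype.card ι) '' {γ : ℝ | γ ∈ Ioc 0 1 ∧ IsPartiallyRigid μ T γ} := by
  ext γ
  constructor
  · rintro ⟨⟨hγ₀, hγ₁⟩, m, hm⟩
    exact ⟨γ ^ (Fintype.card ι : ℝ)⁻¹,
      ⟨⟨by positivity, Real.rpow_le_one hγ₀.le hγ₁ (by positivity)⟩, m, hm.of_pi ι hγ₀.le⟩,
      Real.rpow_inv_natCast_pow hγ₀.le Fintype.card_ne_zero⟩
  · rintro ⟨γ, ⟨⟨hγ₀, hγ₁⟩, m, hm⟩, rfl⟩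
    exact ⟨⟨by positivity, pow_le_one₀ hγ₀.le hγ₁⟩, m, hm.pi ι hT hγ₀.le hγ₁⟩

lemma partialRigidityRate_pi_eq_pow_card [IsFiniteMeasure μ] (hT : MeasurePreserving T μ μ) :
    partialRigidityRate (Measure.pi fun _ : ι => μ) (fun x i => T (x i)) =
      partialRigidityRate μ T ^ Fintype.card ι := by
  rw [partialRigidityRate, partialRigidityRate, setOf_isPartiallyRigid_pi ι hT,
    Real.sSup_image_pow (fun γ hγ => hγ.1.1.le) ⟨1, fun γ hγ => hγ.1.2⟩ Fintype.card_ne_zero]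

end PartialRigidity

theorem partialRigidityRate_pi_general
    {X : Type*} [MeasurableSpace X]
    (μ : Measure X) [IsProbabilityMeasure μ] (T : X → X)
    (hT : MeasurePreserving T μ μ)
    (n : ℕ) (hn : 1 ≤ n) :
    partialRigidityRate (Measure.pi fun _ : Fin n => μ) (fun x i => T (x i)) =
      (partialRigidityRate μ T) ^ n := by
  have : Nonempty (Fin n) := ⟨⟨0, hn⟩⟩
  simpa using partialRigidityRate_pi_eq_pow_card (Fin n) hT

/-- The partial rigidity rate of the `n`-fold product system is the `n`-th power of the
partial rigidity rate: `δ_{μ^{⊗n}} = (δ_μ)ⁿ`. -/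
theorem partialRigidityRate_pi
    {X : Type*} [MeasurableSpace X] [StandardBorelSpace X]
    (μ : Measure X) [IsProbabilityMeasure μ] (T : X → X)
    (hT : MeasurePreserving T μ μ)
    (hTinv : ∃ Tinv : X → X, Measurable Tinv ∧
      Function.LeftInverse Tinv T ∧ Function.RightInverse Tinv T)
    (n : ℕ) (hn : 1 ≤ n) :
    partialRigidityRate (Measure.pi fun _ : Fin n => μ) (fun x i => T (x i)) =
      (partialRigidityRate μ T) ^ n :=
  partialRigidityRate_pi_general μ T hT n hn
end
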